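/- arXiv:2506.21296 — 2 statements merged into one kernel-verified Lean document; each statement's English description precedes it below -/
import Mathlib

section
/- Fix t₁, …, t_d ∈ [−1,1] and set x_i = ξ_β(t_i) where ξ_β(t) = sign(t)(1 − exp(−|t|β)). Fix z ∈ (0,1) and m₁ = (−log z)/β. Then F^st_β(x₁,…,x_d)^{m₁} → z^{φ^st(t₁,…,t_d)} as β → ∞, where φ^st(t₁,…,t_d) = min(Σ_{i: t_i<0}|t_i|, Σ_{i: t_i>0}|t_i|). -/
open Filter Real

/-- `ξ_β(t) = sign(t)·(1 − exp(−|t|β))`. -/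
noncomputable def xiMap (β t : ℝ) : ℝ := Real.sign t * (1 - Real.exp (-|t| * β))

/-- `f_β^-(x) = (1+x)/2 + (1−x)/2·e^{−β}`. -/
noncomputable def fMinus (β x : ℝ) : ℝ := (1 + x) / 2 + (1 - x) / 2 * Real.exp (-β)

/-- `f_β^+(x) = (1−x)/2 + (1+x)/2·e^{−β}`. -/
noncomputable def fPlus (β x : ℝ) : ℝ := (1 - x) / 2 + (1 + x) / 2 * Real.exp (-β)

/-- `F^st_β(x₁,…,x_d) = ∏ f_β^-(x_i) + ∏ f_β^+(x_i)`. -/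
noncomputable def Fst (β : ℝ) {d : ℕ} (x : Fin d → ℝ) : ℝ :=
  (∏ i, fMinus β (x i)) + ∏ i, fPlus β (x i)

/-! The limit is an exponential-rate computation. Say `f` has rate `a` if
`f β = exp (a β + o(β))`. Each factor `f_β^-(ξ_β(t))` lies between constant multiples of
`exp (-t⁻ β)` (for `t < 0` the term carrying `e^{-β}` is dominated because `t ≥ -1`), so it has
rate `-t⁻`, and symmetrically `f_β^+(ξ_β(t))` has rate `-t⁺`. Rates add under products and
combine by `max` under sums, since `max f g ≤ f + g ≤ 2 max f g`; hence `F^st_β` has rate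
`-min (∑ tᵢ⁻) (∑ tᵢ⁺)`, and raising to the power `-log z / β` turns this rate into the limit
`exp (log z · min (∑ tᵢ⁻) (∑ tᵢ⁺)) = z ^ φ^st`. -/

open Finset Topology

def HasExpRate (f : ℝ → ℝ) (a : ℝ) : Prop :=
  (∀ᶠ β in atTop, 0 < f β) ∧ Tendsto (fun β => log (f β) / β) atTop (𝓝 a)

namespace HasExpRate

variable {f g : ℝ → ℝ} {a b : ℝ}

lemma exp_mul (a : ℝ) : HasExpRate (fun β => exp (a * β)) a := by
  refine ⟨.of_forall fun β => exp_pos _, tendsto_const_nhds.congr' ?_⟩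
  filter_upwards [eventually_ne_atTop 0] with β hβ
  rw [log_exp, mul_div_cancel_right₀ a hβ]

lemma of_le_of_le {c₁ c₂ : ℝ} (hg : HasExpRate g a) (hc₁ : 0 < c₁)
    (hlow : ∀ᶠ β in atTop, c₁ * g β ≤ f β) (hup : ∀ᶠ β in atTop, f β ≤ c₂ * g β) :
    HasExpRate f a := by
  have hpos : ∀ᶠ β in atTop, 0 < f β :=
    (hg.1.and hlow).mono fun β h => (mul_pos hc₁ h.1).trans_le h.2
  obtain ⟨β, hgβ, hfβ, hupβ⟩ := (hg.1.and (hpos.and hup)).exists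
  have hc₂ : 0 < c₂ := pos_of_mul_pos_left (hfβ.trans_le hupβ) hgβ.le
  have hlim (c : ℝ) : Tendsto (fun β => (log c + log (g β)) / β) atTop (𝓝 a) := by
    simpa [add_div] using (tendsto_const_nhds.div_atTop tendsto_id).add hg.2
  refine ⟨hpos, tendsto_of_tendsto_of_tendsto_of_le_of_le' (hlim c₁) (hlim c₂) ?_ ?_⟩
  · filter_upwards [eventually_gt_atTop 0, hg.1, hlow] with β hβ hgβ hlowβ
    rw [← log_mul hc₁.ne' hgβ.ne']
    exact div_le_div_of_nonneg_right (log_le_log (by positivity) hlowβ) hβ.le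
  · filter_upwards [eventually_gt_atTop 0, hpos, hg.1, hup] with β hβ hfβ hgβ hupβ
    rw [← log_mul hc₂.ne' hgβ.ne']
    exact div_le_div_of_nonneg_right (log_le_log hfβ hupβ) hβ.le

lemma max (hf : HasExpRate f a) (hg : HasExpRate g b) :
    HasExpRate (fun β => max (f β) (g β)) (max a b) := by
  refine ⟨(hf.1.and hg.1).mono fun β h => lt_max_of_lt_left h.1, (hf.2.max hg.2).congr' ?_⟩
  filter_upwards [eventually_gt_atTop 0, hf.1, hg.1] with β hβ hfβ hgβ
  rcases le_total (f β) (g β) with h | h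
  · rw [max_eq_right h, max_eq_right (div_le_div_of_nonneg_right (log_le_log hfβ h) hβ.le)]
  · rw [max_eq_left h, max_eq_left (div_le_div_of_nonneg_right (log_le_log hgβ h) hβ.le)]

lemma add (hf : HasExpRate f a) (hg : HasExpRate g b) :
    HasExpRate (fun β => f β + g β) (Max.max a b) := by
  refine (hf.max hg).of_le_of_le one_pos ?_ (c₂ := 2) ?_
  · filter_upwards [hf.1, hg.1] with β hfβ hgβ
    rw [one_mul, max_le_iff]
    constructor <;> linarith
  · filter_upwards with β
    linarith [le_max_left (f β) (g β), le_max_right (f β) (g β)]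

lemma prod {ι : Type*} (s : Finset ι) {f : ι → ℝ → ℝ} {a : ι → ℝ}
    (h : ∀ i ∈ s, HasExpRate (f i) (a i)) :
    HasExpRate (fun β => ∏ i ∈ s, f i β) (∑ i ∈ s, a i) := by
  have hpos : ∀ᶠ β in atTop, ∀ i ∈ s, 0 < f i β :=
    (eventually_all_finset s).2 fun i hi => (h i hi).1
  refine ⟨hpos.mono fun β hβ => prod_pos hβ, (tendsto_finsetSum s fun i hi => (h i hi).2).congr' ?_⟩
  filter_upwards [hpos] with β hβ
  rw [log_prod fun i hi => (hβ i hi).ne', sum_div]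

lemma tendsto_rpow_div (h : HasExpRate f a) (c : ℝ) :
    Tendsto (fun β => f β ^ (c / β)) atTop (𝓝 (exp (c * a))) := by
  refine ((continuous_exp.tendsto _).comp (h.2.const_mul c)).congr' ?_
  filter_upwards [h.1] with β hβ
  rw [Function.comp_apply, rpow_def_of_pos hβ, mul_div_left_comm]

end HasExpRate

lemma xiMap_of_neg (β : ℝ) {t : ℝ} (ht : t < 0) : xiMap β t = exp (t * β) - 1 := by
  rw [xiMap, sign_of_neg ht, abs_of_neg ht, neg_neg]
  ring

lemma xiMap_of_nonneg (β : ℝ) {t : ℝ} (ht : 0 ≤ t) : xiMap β t = 1 - exp (-t * β) := by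
  rcases ht.eq_or_lt with rfl | ht
  · simp [xiMap]
  · rw [xiMap, sign_of_pos ht, abs_of_pos ht, one_mul]

lemma xiMap_neg (β t : ℝ) : xiMap β (-t) = -xiMap β t := by
  simp [xiMap, Real.sign_neg]

lemma fPlus_eq_fMinus_neg (β x : ℝ) : fPlus β x = fMinus β (-x) := by
  unfold fPlus fMinus; ring

lemma fMinus_xiMap_mem_Icc {β t : ℝ} (hβ : 0 ≤ β) (ht : -1 ≤ t) :
    fMinus β (xiMap β t) ∈ Set.Icc (1 / 2 * exp (-t⁻ * β)) (3 / 2 * exp (-t⁻ * β)) := by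
  have hβ' : 0 < exp (-β) := exp_pos _
  rcases lt_or_ge t 0 with htn | htn
  · have hexp : exp (-β) ≤ exp (t * β) := exp_le_exp.2 (by nlinarith)
    have hexp1 : exp (t * β) ≤ 1 := exp_le_one_iff.2 (by nlinarith)
    rw [negPart_eq_neg.2 htn.le, neg_neg, fMinus, xiMap_of_neg β htn]
    constructor <;> nlinarith
  · have hexp1 : exp (-t * β) ≤ 1 := exp_le_one_iff.2 (by nlinarith)
    have hexp0 := exp_pos (-t * β)
    have hβ1 : exp (-β) ≤ 1 := exp_le_one_iff.2 (by linarith)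
    rw [negPart_eq_zero.2 htn, neg_zero, zero_mul, exp_zero, fMinus, xiMap_of_nonneg β htn]
    constructor <;> nlinarith

lemma hasExpRate_fMinus_xiMap {t : ℝ} (ht : -1 ≤ t) :
    HasExpRate (fun β => fMinus β (xiMap β t)) (-t⁻) :=
  (HasExpRate.exp_mul _).of_le_of_le (by norm_num)
    ((eventually_ge_atTop 0).mono fun _ hβ => (fMinus_xiMap_mem_Icc hβ ht).1)
    ((eventually_ge_atTop 0).mono fun _ hβ => (fMinus_xiMap_mem_Icc hβ ht).2)

lemma hasExpRate_fPlus_xiMap {t : ℝ} (ht : t ≤ 1) :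
    HasExpRate (fun β => fPlus β (xiMap β t)) (-t⁺) := by
  simpa only [fPlus_eq_fMinus_neg, ← xiMap_neg, negPart_neg] using
    hasExpRate_fMinus_xiMap (t := -t) (by linarith)

lemma hasExpRate_Fst_xiMap {d : ℕ} {t : Fin d → ℝ} (ht : ∀ i, t i ∈ Set.Icc (-1 : ℝ) 1) :
    HasExpRate (fun β => Fst β fun i => xiMap β (t i))
      (-min (∑ i, (t i)⁻) (∑ i, (t i)⁺)) := by
  have h := (HasExpRate.prod univ fun i _ => hasExpRate_fMinus_xiMap (ht i).1).add
    (HasExpRate.prod univ fun i _ => hasExpRate_fPlus_xiMap (ht i).2)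
  rwa [sum_neg_distrib, sum_neg_distrib, max_neg_neg] at h

lemma sum_abs_filter_neg {ι : Type*} (s : Finset ι) (f : ι → ℝ) :
    ∑ i ∈ s.filter (fun i => f i < 0), |f i| = ∑ i ∈ s, (f i)⁻ := by
  rw [sum_filter]
  refine sum_congr rfl fun i _ => ?_
  rw [negPart_eq_ite_lt]
  split_ifs with h
  exacts [abs_of_neg h, rfl]

lemma sum_abs_filter_pos {ι : Type*} (s : Finset ι) (f : ι → ℝ) :
    ∑ i ∈ s.filter (fun i => 0 < f i), |f i| = ∑ i ∈ s, (f i)⁺ := by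
  rw [sum_filter]
  refine sum_congr rfl fun i _ => ?_
  rw [posPart_eq_ite_lt]
  split_ifs with h
  exacts [abs_of_pos h, rfl]

/-- With `x_i = ξ_β(t_i)` and `m₁ = (−log z)/β`,
`F^st_β(x₁,…,x_d)^{m₁} → z^{φ^st(t₁,…,t_d)}` as `β → ∞`, where
`φ^st = min(Σ_{t_i<0}|t_i|, Σ_{t_i>0}|t_i|)`. -/
theorem tendsto_Fst_rpow (d : ℕ) (t : Fin d → ℝ)
    (ht : ∀ i, t i ∈ Set.Icc (-1 : ℝ) 1) (z : ℝ) (hz : z ∈ Set.Ioo (0 : ℝ) 1) :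
    Tendsto
      (fun β : ℝ => (Fst β (fun i => xiMap β (t i))) ^ (-Real.log z / β))
      atTop
      (nhds (z ^ min (∑ i ∈ Finset.univ.filter (fun i => t i < 0), |t i|)
                     (∑ i ∈ Finset.univ.filter (fun i => 0 < t i), |t i|))) := by
  rw [sum_abs_filter_neg, sum_abs_filter_pos, rpow_def_of_pos hz.1]
  convert (hasExpRate_Fst_xiMap ht).tendsto_rpow_div (-log z) using 2
  rw [neg_mul_neg]
end

section
/- Fix z ∈ (0,1) and m₁ = (−log z)/β. For fixed x₁, …, x_d ∈ {−1,0,+1}, as β → ∞, F^st_β(x₁,…,x_d)^{m₁} converges to z^{min(k⁻,k⁺)}, where k⁻ and k⁺ are the numbers of −1's and +1's among x₁,…,x_d. -/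
open Filter Real

lemma key_tendsto (a b c : ℕ) (hab : a ≤ b) (z : ℝ) (hz0 : 0 < z) :
    Tendsto (fun β : ℝ =>
        (((1 + Real.exp (-β)) / 2) ^ c * (Real.exp (-β) ^ a + Real.exp (-β) ^ b))
          ^ (-Real.log z / β)) atTop (nhds (z ^ a)) := by
  set g : ℝ → ℝ := fun β => ((1 + Real.exp (-β)) / 2) ^ c * (1 + Real.exp (-β) ^ (b - a))
    with hg
  have hg_pos : ∀ β, 0 < g β := fun β => by
    have := Real.exp_pos (-β); positivity
  have hm : Tendsto (fun β : ℝ => -Real.log z / β) atTop (nhds 0) :=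
    tendsto_const_nhds.div_atTop tendsto_id
  have he : Tendsto (fun β : ℝ => Real.exp (-β)) atTop (nhds 0) := by
    exact Real.tendsto_exp_atBot.comp tendsto_neg_atTop_atBot
  have hgl : Tendsto g atTop
      (nhds (((1 + 0) / 2) ^ c * (1 + (0 : ℝ) ^ (b - a)))) := by
    exact (((tendsto_const_nhds.add he).div_const 2).pow c).mul
      (tendsto_const_nhds.add (he.pow (b - a)))
  have hLpos : (0 : ℝ) < ((1 + 0) / 2) ^ c * (1 + (0 : ℝ) ^ (b - a)) := by
    have h0 : (0 : ℝ) ≤ (0 : ℝ) ^ (b - a) := pow_nonneg le_rfl _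
    have : (0 : ℝ) < 1 + (0 : ℝ) ^ (b - a) := by linarith
    positivity
  have h1 : Tendsto (fun β => g β ^ (-Real.log z / β)) atTop (nhds 1) := by
    have := hgl.rpow hm (Or.inl (ne_of_gt hLpos))
    simpa using this
  have heq : ∀ᶠ β in atTop,
      z ^ a * g β ^ (-Real.log z / β)
        = (((1 + Real.exp (-β)) / 2) ^ c * (Real.exp (-β) ^ a + Real.exp (-β) ^ b))
            ^ (-Real.log z / β) := by
    filter_upwards [eventually_gt_atTop (0 : ℝ)] with β hβ
    have hE : Real.exp (-β) ^ a + Real.exp (-β) ^ b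
        = Real.exp (-β) ^ a * (1 + Real.exp (-β) ^ (b - a)) := by
      rw [mul_add, mul_one, ← pow_add]
      congr 2
      omega
    rw [hE, show ((1 + Real.exp (-β)) / 2) ^ c
          * (Real.exp (-β) ^ a * (1 + Real.exp (-β) ^ (b - a)))
        = Real.exp (-β) ^ a * g β by rw [hg]; ring]
    rw [Real.mul_rpow (by positivity) (le_of_lt (hg_pos β))]
    congr 1
    rw [← Real.exp_nat_mul, Real.rpow_def_of_pos (Real.exp_pos _), Real.log_exp]
    rw [show ((a : ℝ) * -β) * (-Real.log z / β) = (a : ℝ) * Real.log z by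
      field_simp]
    rw [Real.exp_nat_mul, Real.exp_log hz0]
  exact (Tendsto.congr' heq (by simpa using tendsto_const_nhds.mul h1))

open Classical in
/-- For fixed `x₁,…,x_d ∈ {−1,0,+1}` and `m₁ = (−log z)/β`, as `β → ∞`,
`F^st_β(x₁,…,x_d)^{m₁}` tends to `z^{min(k⁻,k⁺)}`, where `k⁻`, `k⁺` count
the `−1`'s and `+1`'s among the `x_i`. -/
theorem tendsto_Fst_rpow_atoms (d : ℕ) (x : Fin d → ℝ)
    (hx : ∀ i, x i = -1 ∨ x i = 0 ∨ x i = 1)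
    (z : ℝ) (hz : z ∈ Set.Ioo (0 : ℝ) 1) :
    Tendsto (fun β : ℝ => (Fst β x) ^ (-Real.log z / β)) atTop
      (nhds (z ^ min (Finset.univ.filter (fun i => x i = -1)).card
                     (Finset.univ.filter (fun i => x i = 1)).card)) := by
  obtain ⟨hz0, hz1⟩ := hz
  set A := (Finset.univ.filter (fun i => x i = -1)).card with hA
  set B := (Finset.univ.filter (fun i => x i = 1)).card with hB
  set C := (Finset.univ.filter (fun i => x i = 0)).card with hC
  have hminus : ∀ β : ℝ, (∏ i, fMinus β (x i))
      = Real.exp (-β) ^ A * ((1 + Real.exp (-β)) / 2) ^ C := by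
    intro β
    have : ∀ i : Fin d, fMinus β (x i)
        = Real.exp (-β) ^ (if x i = -1 then 1 else 0)
          * ((1 + Real.exp (-β)) / 2) ^ (if x i = 0 then 1 else 0) := by
      intro i
      rcases hx i with h | h | h <;> norm_num [fMinus, h] <;> ring
    rw [Finset.prod_congr rfl (fun i _ => this i), Finset.prod_mul_distrib,
      Finset.prod_pow_eq_pow_sum, Finset.prod_pow_eq_pow_sum, hA, hC,
      Finset.card_filter, Finset.card_filter]
  have hplus : ∀ β : ℝ, (∏ i, fPlus β (x i))
      = Real.exp (-β) ^ B * ((1 + Real.exp (-β)) / 2) ^ C := by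
    intro β
    have : ∀ i : Fin d, fPlus β (x i)
        = Real.exp (-β) ^ (if x i = 1 then 1 else 0)
          * ((1 + Real.exp (-β)) / 2) ^ (if x i = 0 then 1 else 0) := by
      intro i
      rcases hx i with h | h | h <;> norm_num [fPlus, h] <;> ring
    rw [Finset.prod_congr rfl (fun i _ => this i), Finset.prod_mul_distrib,
      Finset.prod_pow_eq_pow_sum, Finset.prod_pow_eq_pow_sum, hB, hC,
      Finset.card_filter, Finset.card_filter]
  have hFst : ∀ β : ℝ, Fst β x
      = ((1 + Real.exp (-β)) / 2) ^ C * (Real.exp (-β) ^ A + Real.exp (-β) ^ B) := by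
    intro β
    rw [Fst, hminus, hplus]; ring
  rcases le_total A B with hab | hab
  · rw [min_eq_left hab]
    exact (key_tendsto A B C hab z hz0).congr (fun β => by rw [hFst β])
  · rw [min_eq_right hab]
    refine (key_tendsto B A C hab z hz0).congr (fun β => by rw [hFst β, add_comm (Real.exp (-β) ^ A)])
end
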